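/- arXiv:1601.04055 — 4 statements merged into one kernel-verified Lean document; each statement's English description precedes it below -/
import Mathlib

section
/- For every even nonnegative integer k, the k-th moment of the semicircle distribution equals the (k/2)-th Catalan number, and all odd moments vanish: (1/(2π)) ∫_{-2}^{2} x^k √(4 - x^2) dx = C_{k/2} if k is even and = 0 if k is odd, where C_n = (1/(n+1)) * binomial(2n, n). -/
open Real

private lemma semicircle_S_even (n : ℕ) :
    (∫ θ in (-(π/2))..(π/2), sin θ ^ (2*n)) =
      π * ∏ i ∈ Finset.range n, (2*(i:ℝ)+1)/(2*i+2) := by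
  induction n with
  | zero => simp
  | succ k ih =>
    rw [Finset.prod_range_succ_comm, mul_left_comm, ← ih, Nat.mul_succ, integral_sin_pow]
    simp [Real.cos_pi_div_two]

private lemma semicircle_subst (n : ℕ) :
    (∫ x in (-2:ℝ)..2, x ^ (2*n) * Real.sqrt (4 - x ^ 2)) =
      2^(2*n+2) * ∫ θ in (-(π/2))..(π/2), sin θ ^ (2*n) * cos θ ^ 2 := by
  have h := intervalIntegral.integral_comp_mul_deriv (a := -(π/2)) (b := π/2)
    (f := fun θ => 2 * sin θ) (f' := fun θ => 2 * cos θ)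
    (g := fun x => x ^ (2*n) * Real.sqrt (4 - x ^ 2))
    (fun x _ => by simpa [mul_comm] using (Real.hasDerivAt_sin x).const_mul 2)
    (by fun_prop) (by fun_prop)
  simp only [Real.sin_neg, Real.sin_pi_div_two, mul_one, mul_neg] at h
  rw [← h, ← intervalIntegral.integral_const_mul]
  apply intervalIntegral.integral_congr
  intro θ hθ
  have hmem : θ ∈ Set.Icc (-(π/2)) (π/2) := by
    rwa [Set.uIcc_of_le (by linarith [Real.pi_pos] : -(π/2) ≤ π/2)] at hθ
  have hc : 0 ≤ cos θ := Real.cos_nonneg_of_mem_Icc hmem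
  have h4 : (4:ℝ) - (2 * sin θ) ^ 2 = (2 * cos θ) ^ 2 := by
    have := sin_sq_add_cos_sq θ; nlinarith
  simp only [Function.comp]
  rw [h4, Real.sqrt_sq (by positivity)]
  ring

private lemma semicircle_prod_eq (n : ℕ) :
    (∏ i ∈ Finset.range n, (2*(i:ℝ)+1)/(2*i+2)) = (n+1) * catalan n / 4^n := by
  induction n with
  | zero => simp
  | succ k ih =>
    have h1 : ((k:ℝ)+1) * (k + 1).centralBinom = 2 * (2*k+1) * k.centralBinom := by
      exact_mod_cast Nat.succ_mul_centralBinom_succ k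
    have h2 : ((k:ℝ)+1) * catalan k = k.centralBinom := by
      exact_mod_cast succ_mul_catalan_eq_centralBinom k
    have h3 : ((k:ℝ)+2) * catalan (k+1) = (k + 1).centralBinom := by
      exact_mod_cast succ_mul_catalan_eq_centralBinom (k+1)
    have hk : ((k:ℝ)+1) ≠ 0 := by positivity
    have hk2 : ((k:ℝ)+2) ≠ 0 := by positivity
    have key : ((k:ℝ)+1) * (((k:ℝ)+2) * catalan (k+1)) =
        ((k:ℝ)+1) * (2*(2*k+1)*catalan k) := by
      rw [h3]; linear_combination h1 - 2*(2*(k:ℝ)+1)*h2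
    have hcat : (catalan (k+1) : ℝ) = 2*(2*k+1)*catalan k / (k+2) := by
      rw [eq_div_iff hk2]
      linear_combination mul_left_cancel₀ hk key
    rw [Finset.prod_range_succ, ih]
    push_cast
    rw [hcat]
    have h4 : ((4:ℝ)^k) ≠ 0 := by positivity
    field_simp
    ring

/-- Moments of the semicircle distribution: the even moments are Catalan numbers,
the odd moments vanish. -/
theorem semicircle_moments (k : ℕ) :
    (1 / (2 * π)) * ∫ x in (-2:ℝ)..2, x ^ k * Real.sqrt (4 - x ^ 2) =
      if Even k then (catalan (k / 2) : ℝ) else 0 := by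
  rcases Nat.even_or_odd k with hk | hk
  · obtain ⟨n, rfl⟩ := hk
    have hn : n + n = 2 * n := by ring
    rw [if_pos (by exact ⟨n, rfl⟩), hn]
    have hdiv : 2 * n / 2 = n := by omega
    rw [hdiv, semicircle_subst]
    have hsplit : (∫ θ in (-(π/2))..(π/2), sin θ ^ (2*n) * cos θ ^ 2) =
        (∫ θ in (-(π/2))..(π/2), sin θ ^ (2*n)) -
          ∫ θ in (-(π/2))..(π/2), sin θ ^ (2*(n+1)) := by
      rw [← intervalIntegral.integral_sub (by apply Continuous.intervalIntegrable; fun_prop)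
        (by apply Continuous.intervalIntegrable; fun_prop)]
      apply intervalIntegral.integral_congr
      intro θ _
      have hpy := sin_sq_add_cos_sq θ
      simp only [show 2*(n+1) = 2*n+2 from by ring, pow_add]
      linear_combination (sin θ ^ (2*n)) * hpy
    rw [hsplit, semicircle_S_even n, semicircle_S_even (n+1),
      Finset.prod_range_succ, semicircle_prod_eq n]
    have hπ : π ≠ 0 := Real.pi_ne_zero
    have h4 : ((4:ℝ)^n) ≠ 0 := by positivity
    have hn1 : ((n:ℝ)+1) ≠ 0 := by positivity
    have h2n2 : (2*(n:ℝ)+2) ≠ 0 := by positivity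
    have hpow : (2:ℝ)^(2*n+2) = 4 * 4^n := by
      rw [pow_add, pow_mul]; norm_num; ring
    rw [hpow]
    field_simp
    ring
  · obtain ⟨m, rfl⟩ := hk
    rw [if_neg (by simp [Nat.even_add_one, parity_simps])]
    have hint : ∀ a b : ℝ, IntervalIntegrable
        (fun x : ℝ => x ^ (2*m+1) * Real.sqrt (4 - x ^ 2)) MeasureTheory.volume a b := by
      intro a b; apply Continuous.intervalIntegrable; fun_prop
    have hadd : (∫ x in (-2:ℝ)..0, x ^ (2*m+1) * Real.sqrt (4 - x ^ 2)) +
        (∫ x in (0:ℝ)..2, x ^ (2*m+1) * Real.sqrt (4 - x ^ 2)) =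
        ∫ x in (-2:ℝ)..2, x ^ (2*m+1) * Real.sqrt (4 - x ^ 2) :=
      intervalIntegral.integral_add_adjacent_intervals (hint _ _) (hint _ _)
    have hneg : (∫ x in (-2:ℝ)..0, x ^ (2*m+1) * Real.sqrt (4 - x ^ 2)) =
        -∫ x in (0:ℝ)..2, x ^ (2*m+1) * Real.sqrt (4 - x ^ 2) := by
      have h := intervalIntegral.integral_comp_neg (a := (0:ℝ)) (b := 2)
        (fun x : ℝ => x ^ (2*m+1) * Real.sqrt (4 - x ^ 2))
      simp only [neg_zero] at h
      rw [← h, ← intervalIntegral.integral_neg]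
      apply intervalIntegral.integral_congr
      intro x _
      have h1 : (-x) ^ (2*m+1) = -(x ^ (2*m+1)) := Odd.neg_pow ⟨m, by ring⟩ x
      simp only [h1, neg_sq]
      ring
    rw [← hadd, hneg]
    ring
end

section
/- Let z ∈ ℂ_+ with |z| bounded, and suppose u ∈ ℂ satisfies u^2 + zu + 1 + r = 0 with |r| ≤ 1. Then min{|u - m(z)|, |u - m̃(z)|} ≤ C|r|/√(κ + η + |r|) for some constant C, where m, m̃ are the two roots of w^2 + zw + 1 = 0 and κ = ||Re z| - 2|, η = Im z. -/
/-!
The two roots satisfy `m + m̃ = -z`, `m m̃ = 1`, so `(u - m)(u - m̃) = u² + zu + 1 = -r` and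
`(m - m̃)² = z² - 4 = (z - 2)(z + 2)`. One of the two factors `|z ∓ 2|` is at least `2`, the
other at least `(κ + η)/2`, so the roots are `√(κ + η)` apart and the farther of them is at
distance `b ≳ √(κ + η)` from `u`; also `b² ≥ |r|`. Hence `b ≳ √(κ + η + |r|)`, and the nearer
root is at distance `|r| / b`.
-/

open Complex

lemma min_mul_sqrt_add_mul_le {a b s : ℝ} (ha : 0 ≤ a) (hb : 0 ≤ b) (h : √s ≤ a + b) :
    min a b * √(s + a * b) ≤ 3 * (a * b) := by
  wlog hab : a ≤ b generalizing a b
  · rw [min_comm, mul_comm a b]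
    exact this hb ha (by linarith) (by linarith)
  have hs : s ≤ (a + b) ^ 2 := (Real.sqrt_le_left (by positivity)).mp h
  have hsqrt : √(s + a * b) ≤ 3 * b :=
    (Real.sqrt_le_left (by positivity)).mpr (by nlinarith)
  calc min a b * √(s + a * b) = a * √(s + a * b) := by rw [min_eq_left hab]
    _ ≤ a * (3 * b) := mul_le_mul_of_nonneg_left hsqrt ha
    _ = 3 * (a * b) := by ring

lemma abs_abs_re_sub_two_add_abs_im_le_norm_sq_sub_four (z : ℂ) :
    |(|z.re| - 2)| + |z.im| ≤ ‖z ^ 2 - 4‖ := by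
  wlog hre : 0 ≤ z.re generalizing z
  · simpa [abs_neg, even_two.neg_pow] using this (-z) (by rw [neg_re]; linarith)
  have hsub_re : |z.re - 2| ≤ ‖z - 2‖ := by simpa using abs_re_le_norm (z - 2)
  have hsub_im : |z.im| ≤ ‖z - 2‖ := by simpa using abs_im_le_norm (z - 2)
  have hadd : 2 ≤ ‖z + 2‖ := by
    have := re_le_norm (z + 2)
    simp only [add_re, re_ofNat] at this
    linarith
  have hfactor : ‖z ^ 2 - 4‖ = ‖z - 2‖ * ‖z + 2‖ := by
    rw [← norm_mul]; ring_nf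
  rw [abs_of_nonneg hre, hfactor]
  nlinarith [norm_nonneg (z - 2)]

section Vieta

variable {z m mt : ℂ}

lemma add_add_eq_zero_of_roots (hm : m ^ 2 + z * m + 1 = 0) (hmt : mt ^ 2 + z * mt + 1 = 0)
    (hne : m ≠ mt) : m + mt + z = 0 := by
  have hkey : (m - mt) * (m + mt + z) = 0 := by linear_combination hm - hmt
  exact (mul_eq_zero.mp hkey).resolve_left (sub_ne_zero.mpr hne)

lemma mul_eq_one_of_roots (hm : m ^ 2 + z * m + 1 = 0) (hmt : mt ^ 2 + z * mt + 1 = 0)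
    (hne : m ≠ mt) : m * mt = 1 := by
  linear_combination m * add_add_eq_zero_of_roots hm hmt hne - hm

lemma sub_mul_sub_eq_of_roots (hm : m ^ 2 + z * m + 1 = 0) (hmt : mt ^ 2 + z * mt + 1 = 0)
    (hne : m ≠ mt) (u : ℂ) : (u - m) * (u - mt) = u ^ 2 + z * u + 1 := by
  linear_combination -u * add_add_eq_zero_of_roots hm hmt hne + mul_eq_one_of_roots hm hmt hne

lemma sub_sq_eq_of_roots (hm : m ^ 2 + z * m + 1 = 0) (hmt : mt ^ 2 + z * mt + 1 = 0)
    (hne : m ≠ mt) : (m - mt) ^ 2 = z ^ 2 - 4 := by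
  linear_combination (m + mt - z) * add_add_eq_zero_of_roots hm hmt hne
    - 4 * mul_eq_one_of_roots hm hmt hne

end Vieta

theorem quadratic_stability_general (τ : ℝ) :
    ∃ C : ℝ, 0 < C ∧
      ∀ z u r m mt : ℂ, 0 < z.im → ‖z‖ ≤ τ →
        u ^ 2 + z * u + 1 + r = 0 → ‖r‖ ≤ 1 →
        0 < m.im → mt.im < 0 →
        m ^ 2 + z * m + 1 = 0 → mt ^ 2 + z * mt + 1 = 0 →
        min ‖u - m‖ ‖u - mt‖ ≤
          C * ‖r‖ / Real.sqrt (|(|z.re| - 2)| + z.im + ‖r‖) := by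
  refine ⟨3, by norm_num, fun z u r m mt hz _ hu _ hm_im hmt_im hm hmt ↦ ?_⟩
  have hne : m ≠ mt := fun h ↦ by rw [h] at hm_im; linarith
  have hprod : ‖u - m‖ * ‖u - mt‖ = ‖r‖ := by
    rw [← norm_mul, sub_mul_sub_eq_of_roots hm hmt hne, ← norm_neg]
    congr 1
    linear_combination -hu
  have hgap : √(|(|z.re| - 2)| + z.im) ≤ ‖m - mt‖ := by
    rw [← Real.sqrt_sq (norm_nonneg (m - mt)), ← norm_pow, sub_sq_eq_of_roots hm hmt hne]
    gcongr
    simpa [abs_of_pos hz] using abs_abs_re_sub_two_add_abs_im_le_norm_sq_sub_four z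
  have hsum : √(|(|z.re| - 2)| + z.im) ≤ ‖u - m‖ + ‖u - mt‖ :=
    hgap.trans (by simpa [norm_sub_rev u m] using norm_sub_le_norm_sub_add_norm_sub m u mt)
  have hpos : 0 < √(|(|z.re| - 2)| + z.im + ‖r‖) := Real.sqrt_pos.mpr (by positivity)
  rw [le_div_iff₀ hpos, ← hprod]
  exact min_mul_sqrt_add_mul_le (norm_nonneg _) (norm_nonneg _) hsum

/-- Stability of the self-consistent quadratic equation: if `u² + zu + 1 + r = 0`
with `|r| ≤ 1` and `z` in a bounded domain of the upper half-plane, then `u` is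
within `C|r|/√(κ + η + |r|)` of one of the two roots `m ∈ ℂ₊`, `m̃ ∈ ℂ₋` of
`w² + zw + 1 = 0`, where `κ = ||Re z| - 2|` and `η = Im z`. -/
theorem quadratic_stability (τ : ℝ) (hτ : 0 < τ) :
    ∃ C : ℝ, 0 < C ∧
      ∀ z u r m mt : ℂ, 0 < z.im → ‖z‖ ≤ τ →
        u ^ 2 + z * u + 1 + r = 0 → ‖r‖ ≤ 1 →
        0 < m.im → mt.im < 0 →
        m ^ 2 + z * m + 1 = 0 → mt ^ 2 + z * mt + 1 = 0 →
        min ‖u - m‖ ‖u - mt‖ ≤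
          C * ‖r‖ / Real.sqrt (|(|z.re| - 2)| + z.im + ‖r‖) :=
  quadratic_stability_general τ
end

section
/- For a nonnegative random variable X, deterministic Φ ≥ N^{-C} with E X^p ≤ N^{C_p} for all p: X is stochastically dominated by Φ (i.e., for all ε, D > 0, P(X > N^ε Φ) ≤ N^{-D} for large N) if and only if for every fixed n, E X^n ≤ N^ε Φ^n for all ε > 0 and large N. -/
/-!
Markov's inequality for the `n`-th moment gives `P(X > N^ε Φ) ≤ N^(1 - εn) ≤ N^(-D)` as soon as
`εn ≥ D + 1`. Conversely, split `X^n` at the levels `t = N^δ Φ` and `s = N^K`: below `t` it is at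
most `t^n`, between `t` and `s` at most `s^n` on the rare event `{X > t}`, and above `s` at most
`X^(n+1) / s`. The a priori bound on `E X^(n+1)` and `Φ ≥ N^(-C)` make the last two contributions
at most `Φ^n` for suitable `K` and `D`.
-/

open MeasureTheory Filter

section Truncation

variable {Ω : Type*} [MeasurableSpace Ω] {μ : Measure Ω} {X : Ω → ℝ}

theorem meas_lt_le_lintegral_pow_div (hX : AEMeasurable X μ) {t : ℝ} (ht : 0 < t) (n : ℕ) :
    μ {ω | t < X ω} ≤ (∫⁻ ω, ENNReal.ofReal (X ω ^ n) ∂μ) / ENNReal.ofReal (t ^ n) :=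
  (measure_mono fun _ hω ↦ ENNReal.ofReal_le_ofReal (pow_le_pow_left₀ ht.le hω.le n)).trans
    (meas_ge_le_lintegral_div (by fun_prop) (ENNReal.ofReal_pos.2 (pow_pos ht n)).ne'
      ENNReal.ofReal_ne_top)

theorem ofReal_pow_le_truncation {x : ℝ} (hx : 0 ≤ x) (t : ℝ) {s : ℝ} (hs : 0 < s) (n : ℕ) :
    ENNReal.ofReal (x ^ n) ≤ ENNReal.ofReal (t ^ n) + (if t < x then ENNReal.ofReal (s ^ n) else 0)
      + ENNReal.ofReal (x ^ (n + 1)) * ENNReal.ofReal s⁻¹ := by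
  rcases le_or_gt x t with hxt | htx
  · exact le_add_right (le_add_right (ENNReal.ofReal_le_ofReal (pow_le_pow_left₀ hx hxt n)))
  rcases le_or_gt x s with hxs | hsx
  · rw [if_pos htx]
    exact le_add_right (le_add_left (ENNReal.ofReal_le_ofReal (pow_le_pow_left₀ hx hxs n)))
  · have : x ^ n ≤ x ^ (n + 1) * s⁻¹ := by
      rw [pow_succ, mul_assoc, le_mul_iff_one_le_right (pow_pos (hs.trans hsx) n),
        ← div_eq_mul_inv, one_le_div hs]
      exact hsx.le
    rw [← ENNReal.ofReal_mul (pow_nonneg hx _)]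
    exact le_add_left (ENNReal.ofReal_le_ofReal this)

theorem lintegral_ofReal_pow_le_truncation [IsProbabilityMeasure μ] (hX : Measurable X)
    (hX0 : ∀ ω, 0 ≤ X ω) (t : ℝ) {s : ℝ} (hs : 0 < s) (n : ℕ) :
    ∫⁻ ω, ENNReal.ofReal (X ω ^ n) ∂μ ≤ ENNReal.ofReal (t ^ n)
      + ENNReal.ofReal (s ^ n) * μ {ω | t < X ω}
      + (∫⁻ ω, ENNReal.ofReal (X ω ^ (n + 1)) ∂μ) * ENNReal.ofReal s⁻¹ := by
  have hA : MeasurableSet {ω | t < X ω} := measurableSet_lt measurable_const hX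
  calc ∫⁻ ω, ENNReal.ofReal (X ω ^ n) ∂μ
      ≤ ∫⁻ ω, (ENNReal.ofReal (t ^ n) + {ω | t < X ω}.indicator (fun _ ↦ ENNReal.ofReal (s ^ n)) ω
        + ENNReal.ofReal (X ω ^ (n + 1)) * ENNReal.ofReal s⁻¹) ∂μ :=
        lintegral_mono fun ω ↦ by
          simpa only [Set.indicator_apply, Set.mem_ofPred_eq] using
            ofReal_pow_le_truncation (hX0 ω) t hs n
    _ = _ := by
        rw [lintegral_add_right _ (by fun_prop),
          lintegral_add_right _ (measurable_const.indicator hA),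
          lintegral_const, measure_univ, mul_one, lintegral_indicator_const hA,
          lintegral_mul_const _ (by fun_prop)]

end Truncation

theorem rpow_neg_mul_le_pow {N Φ C : ℝ} (hN : 0 ≤ N) (hΦ : N ^ (-C) ≤ Φ) (n : ℕ) :
    N ^ (-(C * n)) ≤ Φ ^ n := by
  calc N ^ (-(C * n)) = (N ^ (-C)) ^ n := by
        rw [← Real.rpow_natCast, ← Real.rpow_mul hN, neg_mul]
    _ ≤ Φ ^ n := pow_le_pow_left₀ (Real.rpow_nonneg hN _) hΦ n

theorem truncation_terms_le {N Φ C C₁ ε δ D : ℝ} {n : ℕ} (hN : 1 ≤ N) (hΦ : N ^ (-C) ≤ Φ)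
    (hδ : δ * n ≤ ε / 2) (hD : (C₁ + C * n) * n + C * n ≤ D) (hN3 : 3 ≤ N ^ (ε / 2)) :
    (N ^ δ * Φ) ^ n + (N ^ (C₁ + C * n)) ^ n * N ^ (-D) + N ^ C₁ * (N ^ (C₁ + C * n))⁻¹
      ≤ N ^ ε * Φ ^ n := by
  have hN0 : 0 < N := zero_lt_one.trans_le hN
  have hΦn := rpow_neg_mul_le_pow hN0.le hΦ n
  have hΦn0 : 0 ≤ Φ ^ n := (Real.rpow_nonneg hN0.le _).trans hΦn
  have hlow : (N ^ δ * Φ) ^ n ≤ N ^ (ε / 2) * Φ ^ n := by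
    rw [mul_pow, ← Real.rpow_natCast (N ^ δ), ← Real.rpow_mul hN0.le]
    exact mul_le_mul_of_nonneg_right (Real.rpow_le_rpow_of_exponent_le hN hδ) hΦn0
  have hmid : (N ^ (C₁ + C * n)) ^ n * N ^ (-D) ≤ Φ ^ n := by
    rw [← Real.rpow_natCast (N ^ _), ← Real.rpow_mul hN0.le, ← Real.rpow_add hN0]
    exact (Real.rpow_le_rpow_of_exponent_le hN (by linarith)).trans hΦn
  have htop : N ^ C₁ * (N ^ (C₁ + C * n))⁻¹ ≤ Φ ^ n := by
    rw [← Real.rpow_neg hN0.le, ← Real.rpow_add hN0]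
    exact (Real.rpow_le_rpow_of_exponent_le hN (by linarith)).trans hΦn
  have hε : N ^ (ε / 2) * N ^ (ε / 2) = N ^ ε := by rw [← Real.rpow_add hN0, add_halves]
  nlinarith [mul_le_mul_of_nonneg_right hN3 (mul_nonneg (Real.rpow_nonneg hN0.le (ε / 2)) hΦn0)]

section Domination

variable {Ω : Type*} [MeasurableSpace Ω] {μ : Measure Ω} {X : ℕ → Ω → ℝ} {Φ : ℕ → ℝ}

def StochasticallyDominated (μ : Measure Ω) (X : ℕ → Ω → ℝ) (Φ : ℕ → ℝ) : Prop :=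
  ∀ ε > (0 : ℝ), ∀ D > (0 : ℝ), ∀ᶠ N : ℕ in atTop,
    μ {ω | (N : ℝ) ^ ε * Φ N < X N ω} ≤ ENNReal.ofReal ((N : ℝ) ^ (-D))

theorem StochasticallyDominated.lintegral_pow_eventually_le [IsProbabilityMeasure μ]
    (h : StochasticallyDominated μ X Φ) (hX : ∀ N, Measurable (X N)) (hX0 : ∀ N ω, 0 ≤ X N ω)
    {C : ℝ} (hΦ : ∀ᶠ N : ℕ in atTop, (N : ℝ) ^ (-C) ≤ Φ N) (n : ℕ)
    (hmom : ∃ C₁ : ℝ, ∀ᶠ N : ℕ in atTop,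
      ∫⁻ ω, ENNReal.ofReal (X N ω ^ (n + 1)) ∂μ ≤ ENNReal.ofReal ((N : ℝ) ^ C₁))
    {ε : ℝ} (hε : 0 < ε) :
    ∀ᶠ N : ℕ in atTop,
      ∫⁻ ω, ENNReal.ofReal (X N ω ^ n) ∂μ ≤ ENNReal.ofReal ((N : ℝ) ^ ε * Φ N ^ n) := by
  obtain ⟨C₁, hC₁⟩ := hmom
  -- `K` and `D` are chosen so that both tail terms are at most `N^(-Cn) ≤ Φ^n`.
  set K := C₁ + C * n
  set δ := ε / (2 * (n + 1))
  set D := max (K * n + C * n) 1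
  have hδ : δ * n ≤ ε / 2 :=
    calc δ * n ≤ δ * (n + 1) := by gcongr; linarith
      _ = ε / 2 := by simp only [δ]; field_simp
  have h3 : ∀ᶠ N : ℕ in atTop, 3 ≤ (N : ℝ) ^ (ε / 2) :=
    ((tendsto_rpow_atTop (by positivity)).comp tendsto_natCast_atTop_atTop).eventually_ge_atTop 3
  filter_upwards [h δ (by positivity) D (by positivity), hC₁, hΦ, h3, eventually_ge_atTop 1]
    with N hdomN hmomN hΦN h3N hN
  have hN : (1 : ℝ) ≤ N := by exact_mod_cast hN
  have hNK : 0 < (N : ℝ) ^ K := Real.rpow_pos_of_pos (by linarith) K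
  have hΦ0 : 0 ≤ Φ N := (Real.rpow_nonneg N.cast_nonneg _).trans hΦN
  have ht : 0 ≤ ((N : ℝ) ^ δ * Φ N) ^ n := by positivity
  calc ∫⁻ ω, ENNReal.ofReal (X N ω ^ n) ∂μ
      ≤ ENNReal.ofReal (((N : ℝ) ^ δ * Φ N) ^ n)
        + ENNReal.ofReal (((N : ℝ) ^ K) ^ n) * μ {ω | (N : ℝ) ^ δ * Φ N < X N ω}
        + (∫⁻ ω, ENNReal.ofReal (X N ω ^ (n + 1)) ∂μ) * ENNReal.ofReal ((N : ℝ) ^ K)⁻¹ :=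
        lintegral_ofReal_pow_le_truncation (hX N) (hX0 N) _ hNK n
    _ ≤ ENNReal.ofReal (((N : ℝ) ^ δ * Φ N) ^ n)
        + ENNReal.ofReal (((N : ℝ) ^ K) ^ n) * ENNReal.ofReal ((N : ℝ) ^ (-D))
        + ENNReal.ofReal ((N : ℝ) ^ C₁) * ENNReal.ofReal ((N : ℝ) ^ K)⁻¹ := by gcongr
    _ = ENNReal.ofReal (((N : ℝ) ^ δ * Φ N) ^ n + ((N : ℝ) ^ K) ^ n * (N : ℝ) ^ (-D)
        + (N : ℝ) ^ C₁ * ((N : ℝ) ^ K)⁻¹) := by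
        rw [← ENNReal.ofReal_mul (by positivity), ← ENNReal.ofReal_mul (by positivity),
          ← ENNReal.ofReal_add ht (by positivity),
          ← ENNReal.ofReal_add (add_nonneg ht (by positivity)) (by positivity)]
    _ ≤ ENNReal.ofReal ((N : ℝ) ^ ε * Φ N ^ n) :=
        ENNReal.ofReal_le_ofReal (truncation_terms_le hN hΦN hδ (le_max_left _ _) h3N)

theorem stochasticallyDominated_of_lintegral_pow_le (hX : ∀ N, AEMeasurable (X N) μ)
    (hΦ : ∀ᶠ N : ℕ in atTop, 0 < Φ N)
    (h : ∀ n : ℕ, ∀ᶠ N : ℕ in atTop,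
      ∫⁻ ω, ENNReal.ofReal (X N ω ^ n) ∂μ ≤ ENNReal.ofReal (N * Φ N ^ n)) :
    StochasticallyDominated μ X Φ := by
  intro ε hε D hD
  obtain ⟨n, hn⟩ := exists_nat_ge ((D + 1) / ε)
  have hεn : D + 1 ≤ ε * n := by rwa [div_le_iff₀ hε, mul_comm] at hn
  filter_upwards [h n, hΦ, eventually_ge_atTop 1] with N hmomN hΦN hN
  have hN : (1 : ℝ) ≤ N := by exact_mod_cast hN
  have hN0 : (0 : ℝ) < N := by linarith
  have ht : 0 < (N : ℝ) ^ ε * Φ N := mul_pos (Real.rpow_pos_of_pos hN0 ε) hΦN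
  calc μ {ω | (N : ℝ) ^ ε * Φ N < X N ω}
      ≤ (∫⁻ ω, ENNReal.ofReal (X N ω ^ n) ∂μ) / ENNReal.ofReal (((N : ℝ) ^ ε * Φ N) ^ n) :=
        meas_lt_le_lintegral_pow_div (hX N) ht n
    _ ≤ ENNReal.ofReal (N * Φ N ^ n) / ENNReal.ofReal (((N : ℝ) ^ ε * Φ N) ^ n) := by gcongr
    _ = ENNReal.ofReal ((N : ℝ) ^ (1 - ε * n)) := by
        rw [← ENNReal.ofReal_div_of_pos (pow_pos ht n), mul_pow, ← Real.rpow_natCast (_ ^ ε),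
          ← Real.rpow_mul hN0.le, mul_div_mul_right _ _ (pow_ne_zero n hΦN.ne'),
          Real.rpow_sub hN0, Real.rpow_one]
    _ ≤ ENNReal.ofReal ((N : ℝ) ^ (-D)) :=
        ENNReal.ofReal_le_ofReal (Real.rpow_le_rpow_of_exponent_le hN (by linarith))

end Domination

/-- Equivalence between stochastic domination `X ≺ Φ` and high-moment bounds
`E Xⁿ ≤ N^ε Φⁿ`, for nonnegative random variables `X = X^{(N)}` with
deterministic control parameter `Φ ≥ N^{-C}` and polynomially bounded moments. -/
theorem stochastic_domination_iff_moments {Ω : Type*} [MeasureSpace Ω]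
    [IsProbabilityMeasure (volume : Measure Ω)]
    (X : ℕ → Ω → ℝ) (hXmeas : ∀ N, Measurable (X N)) (hXpos : ∀ N ω, 0 ≤ X N ω)
    (Φ : ℕ → ℝ) (C : ℝ) (hΦ : ∀ N : ℕ, 1 ≤ N → (N : ℝ) ^ (-C) ≤ Φ N)
    (hmom : ∀ p : ℕ, ∃ Cp : ℝ, ∀ N : ℕ, 1 ≤ N →
      ∫⁻ ω, ENNReal.ofReal (X N ω ^ p) ≤ ENNReal.ofReal ((N : ℝ) ^ Cp)) :
    (∀ ε > (0 : ℝ), ∀ D > (0 : ℝ), ∃ N₀ : ℕ, ∀ N ≥ N₀,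
        volume {ω | X N ω > (N : ℝ) ^ ε * Φ N} ≤ ENNReal.ofReal ((N : ℝ) ^ (-D))) ↔
      (∀ n : ℕ, ∀ ε > (0 : ℝ), ∃ N₀ : ℕ, ∀ N ≥ N₀,
        ∫⁻ ω, ENNReal.ofReal (X N ω ^ n) ≤ ENNReal.ofReal ((N : ℝ) ^ ε * Φ N ^ n)) := by
  have hΦ' : ∀ᶠ N : ℕ in atTop, (N : ℝ) ^ (-C) ≤ Φ N := eventually_atTop.2 ⟨1, hΦ⟩
  have hΦpos : ∀ᶠ N : ℕ in atTop, 0 < Φ N := by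
    filter_upwards [hΦ', eventually_ge_atTop 1] with N hΦN hN
    exact (Real.rpow_pos_of_pos (by exact_mod_cast hN) _).trans_le hΦN
  simp only [← eventually_atTop]
  constructor
  · intro hdom n ε hε
    exact StochasticallyDominated.lintegral_pow_eventually_le hdom hXmeas hXpos hΦ' n
      ((hmom (n + 1)).imp fun _ h ↦ eventually_atTop.2 ⟨1, h⟩) hε
  · intro hmomε
    refine stochasticallyDominated_of_lintegral_pow_le (fun N ↦ (hXmeas N).aemeasurable) hΦpos
      fun n ↦ ?_
    simpa only [Real.rpow_one] using hmomε n 1 one_pos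
end

section
/- (Helffer–Sjöstrand formula) Let n ∈ ℕ, f ∈ C^{n+1}(ℝ), and define the almost analytic extension f̃_n(x+iy) = ∑_{k=0}^{n} (iy)^k f^{(k)}(x)/k!. Let χ ∈ C_c^∞(ℂ; [0,1]) be a smooth cutoff. Then for every λ ∈ ℝ with χ(λ) = 1, f(λ) = (1/π) ∫_ℂ ∂̄(f̃_n(z) χ(z)) / (λ - z) d²z, where ∂̄ = (∂_x + i∂_y)/2 and d²z is Lebesgue measure on ℂ. -/
open MeasureTheory

/-- The almost analytic extension of degree `n` of a function `f : ℝ → ℝ`: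
`f̃_n(x+iy) = ∑_{k=0}^n (iy)^k f^{(k)}(x)/k!`. -/
noncomputable def almostAnalyticExt (n : ℕ) (f : ℝ → ℝ) (z : ℂ) : ℂ :=
  ∑ k ∈ Finset.range (n + 1),
    (Complex.I * (z.im : ℂ)) ^ k * ((iteratedDeriv k f z.re : ℝ) : ℂ) / (Nat.factorial k : ℂ)

/-- The antiholomorphic derivative `∂̄ g = (∂_x g + i ∂_y g)/2` of `g : ℂ → ℂ`. -/
noncomputable def dbar (g : ℂ → ℂ) (z : ℂ) : ℂ :=
  (fderiv ℝ g z 1 + Complex.I * fderiv ℝ g z Complex.I) / 2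

open Set Complex

lemma contDiff_one_iteratedDeriv : ∀ (k : ℕ) (f : ℝ → ℝ), ContDiff ℝ (k+1) f →
    ContDiff ℝ 1 (iteratedDeriv k f) := by
  intro k
  induction k with
  | zero => intro f h; simpa [iteratedDeriv_zero] using h
  | succ k ih =>
    intro f h
    rw [iteratedDeriv_succ']
    apply ih
    have h' : ContDiff ℝ ((k:ℕ∞)+1+1) f := by exact_mod_cast h
    exact (contDiff_succ_iff_deriv.mp h').2.2

lemma clm_eval (L : ℂ →L[ℝ] ℂ) (x y : ℝ) :
    L (x + y * Complex.I) = (x:ℂ) * L 1 + (y:ℂ) * L Complex.I := by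
  have h : (x:ℂ) + (y:ℂ) * Complex.I = x • (1:ℂ) + y • Complex.I := by
    simp [Complex.real_smul]
  rw [h, map_add, _root_.map_smul, _root_.map_smul, Complex.real_smul, Complex.real_smul]

lemma abs_cs (θ : ℝ) : ‖((Real.cos θ : ℂ) + (Real.sin θ : ℂ) * Complex.I)‖ = 1 := by
  rw [show ((Real.cos θ : ℂ) + (Real.sin θ : ℂ) * Complex.I) = Complex.exp (θ * Complex.I) by
    rw [Complex.exp_mul_I, Complex.ofReal_cos, Complex.ofReal_sin]]
  exact Complex.norm_exp_ofReal_mul_I θ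

lemma pompeiu (g : ℂ → ℂ) (hg : ContDiff ℝ 1 g) (hgc : HasCompactSupport g) (lam : ℂ) :
    ∫ z : ℂ, dbar g z / (lam - z) = (Real.pi : ℂ) * g lam := by
  have hgd : Differentiable ℝ g := hg.differentiable one_ne_zero
  have hfc : Continuous (fderiv ℝ g) := hg.continuous_fderiv one_ne_zero
  -- radius outside which everything vanishes
  obtain ⟨R, hR⟩ : ∃ R, tsupport g ∪ tsupport (fderiv ℝ g) ⊆ Metric.closedBall lam R :=
    (hgc.union (hgc.fderiv ℝ)).isBounded.subset_closedBall lam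
  have hgz : ∀ z : ℂ, R < dist z lam → g z = 0 ∧ fderiv ℝ g z = 0 := by
    intro z hz
    have hz' : z ∉ Metric.closedBall lam R := by
      simp only [Metric.mem_closedBall]
      exact not_le.mpr hz
    exact ⟨image_eq_zero_of_notMem_tsupport (fun h => hz' (hR (Or.inl h))),
      image_eq_zero_of_notMem_tsupport (fun h => hz' (hR (Or.inr h)))⟩
  -- notation
  set w : ℝ × ℝ → ℂ := fun p =>
    lam - (p.1 : ℂ) * ((Real.cos p.2 : ℂ) + (Real.sin p.2 : ℂ) * Complex.I) with hw
  set A : ℂ → ℂ := fun z => fderiv ℝ g z 1 with hA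
  set B : ℂ → ℂ := fun z => fderiv ℝ g z Complex.I with hB
  set P : ℝ × ℝ → ℂ := fun p =>
    -((Real.cos p.2 : ℂ) * A (w p) + (Real.sin p.2 : ℂ) * B (w p)) with hP
  set Q : ℝ × ℝ → ℂ := fun p =>
    Complex.I * ((Real.sin p.2 : ℂ) * A (w p) - (Real.cos p.2 : ℂ) * B (w p)) with hQ
  set T : Set (ℝ × ℝ) := Set.Ioi (0:ℝ) ×ˢ Set.Ioo (-Real.pi) Real.pi with hT
  have hwc : Continuous w := by
    apply continuous_const.sub
    exact (Complex.continuous_ofReal.comp continuous_fst).mul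
      ((Complex.continuous_ofReal.comp (Real.continuous_cos.comp continuous_snd)).add
        ((Complex.continuous_ofReal.comp (Real.continuous_sin.comp continuous_snd)).mul
          continuous_const))
  have hAc : Continuous A := hfc.clm_apply continuous_const
  have hBc : Continuous B := hfc.clm_apply continuous_const
  have hPc : Continuous P := by
    apply Continuous.neg
    exact ((Complex.continuous_ofReal.comp (Real.continuous_cos.comp continuous_snd)).mul
      (hAc.comp hwc)).add
      ((Complex.continuous_ofReal.comp (Real.continuous_sin.comp continuous_snd)).mul
        (hBc.comp hwc))
  have hQc : Continuous Q := by
    apply continuous_const.mul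
    exact ((Complex.continuous_ofReal.comp (Real.continuous_sin.comp continuous_snd)).mul
      (hAc.comp hwc)).sub
      ((Complex.continuous_ofReal.comp (Real.continuous_cos.comp continuous_snd)).mul
        (hBc.comp hwc))
  have hwdist : ∀ p : ℝ × ℝ, dist (w p) lam = |p.1| := by
    intro p
    have h1 : w p - lam = -((p.1 : ℂ) * ((Real.cos p.2 : ℂ) + (Real.sin p.2 : ℂ) * Complex.I)) := by
      rw [hw]; ring
    rw [Complex.dist_eq, h1, norm_neg, norm_mul, abs_cs, mul_one, Complex.norm_real, Real.norm_eq_abs]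
  have hvan : ∀ p : ℝ × ℝ, R < |p.1| → A (w p) = 0 ∧ B (w p) = 0 ∧ g (w p) = 0 := by
    intro p hp
    have := hgz (w p) (by rw [hwdist]; exact hp)
    refine ⟨?_, ?_, this.1⟩ <;> simp [hA, hB, this.2]
  have hTm : MeasurableSet T := measurableSet_Ioi.prod measurableSet_Ioo
  -- integrability on T
  have key_int : ∀ F : ℝ × ℝ → ℂ, Continuous F → (∀ p : ℝ × ℝ, R < |p.1| → F p = 0) →
      IntegrableOn F T := by
    intro F hFc hFv
    set K : Set (ℝ × ℝ) := Set.Icc (0:ℝ) R ×ˢ Set.Icc (-Real.pi) Real.pi with hK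
    have hKc : IsCompact K := isCompact_Icc.prod isCompact_Icc
    have hKm : MeasurableSet K := measurableSet_Icc.prod measurableSet_Icc
    have h1 : IntegrableOn F (T ∩ K) :=
      (hFc.continuousOn.integrableOn_compact hKc).mono_set inter_subset_right
    have h2 : IntegrableOn F (T \ K) := by
      have hEq : EqOn F (fun _ => (0:ℂ)) (T \ K) := by
        rintro p ⟨hpT, hpK⟩
        apply hFv
        have h01 : (0:ℝ) < p.1 := hpT.1
        have h2' : p.2 ∈ Set.Icc (-Real.pi) Real.pi := ⟨hpT.2.1.le, hpT.2.2.le⟩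
        rw [abs_of_pos h01]
        by_contra hle
        push_neg at hle
        exact hpK ⟨⟨h01.le, hle⟩, h2'⟩
      exact integrableOn_zero.congr_fun hEq.symm (hTm.diff hKm)
    rw [← Set.inter_union_diff T K]
    exact h1.union h2
  have hPint : IntegrableOn P T := key_int P hPc fun p hp => by
    simp [hP, (hvan p hp).1, (hvan p hp).2.1]
  have hQint : IntegrableOn Q T := key_int Q hQc fun p hp => by
    simp [hQ, (hvan p hp).1, (hvan p hp).2.1]
  have hTtarget : polarCoord.target = T := by rw [hT]; exact polarCoord_target
  -- translation invariance
  have step1 : (∫ z : ℂ, dbar g z / (lam - z)) = ∫ z : ℂ, dbar g (lam - z) / z := by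
    rw [← integral_sub_left_eq_self (fun z : ℂ => dbar g z / (lam - z)) volume lam]
    simp only [sub_sub_cancel]
  -- polar coordinates
  have step2 : (∫ z : ℂ, dbar g (lam - z) / z)
      = ∫ p in T, p.1 • (dbar g (lam - Complex.polarCoord.symm p) / Complex.polarCoord.symm p) := by
    rw [← hTtarget]
    exact (Complex.integral_comp_polarCoord_symm (fun z => dbar g (lam - z) / z)).symm
  -- pointwise identity on T
  have step3 : ∀ p ∈ T,
      p.1 • (dbar g (lam - Complex.polarCoord.symm p) / Complex.polarCoord.symm p)
        = (-(1/2) : ℂ) * (P p + Q p) := by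
    rintro ⟨r, θ⟩ ⟨hr, hθ⟩
    have hr' : (0:ℝ) < r := hr
    have hr0 : (r:ℂ) ≠ 0 := Complex.ofReal_ne_zero.mpr hr'.ne'
    have hcs : (Real.cos θ:ℂ)^2 + (Real.sin θ:ℂ)^2 = 1 := by
      exact_mod_cast congrArg (fun x : ℝ => (x:ℂ)) (Real.cos_sq_add_sin_sq θ)
    rw [Complex.polarCoord_symm_apply]
    simp only [hP, hQ, hw, hA, hB, dbar, Complex.real_smul]
    set a := fderiv ℝ g (lam - (r:ℂ) * ((Real.cos θ:ℂ) + (Real.sin θ:ℂ) * Complex.I)) 1 with ha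
    set b := fderiv ℝ g (lam - (r:ℂ) * ((Real.cos θ:ℂ) + (Real.sin θ:ℂ) * Complex.I)) Complex.I
      with hb
    set c := (Real.cos θ : ℂ)
    set s := (Real.sin θ : ℂ)
    have huinv : (c + s*Complex.I)⁻¹ = c - s*Complex.I :=
      inv_eq_of_mul_eq_one_right (by linear_combination hcs - s^2 * Complex.I_sq)
    rw [div_eq_mul_inv _ ((r:ℂ) * _), mul_inv, huinv]
    field_simp [hr0]
    linear_combination (-(b*s)) * Complex.I_sq
  -- the P-integral: integrate in r first
  have intP : (∫ p in T, P p) = (-(2*Real.pi) : ℂ) * g lam := by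
    have hPT : IntegrableOn P (Set.Ioi (0:ℝ) ×ˢ Set.Ioo (-Real.pi) Real.pi) := by
      rw [← hT]; exact hPint
    have hint' : Integrable P
        ((volume.restrict (Set.Ioi (0:ℝ))).prod (volume.restrict (Set.Ioo (-Real.pi) Real.pi))) := by
      rw [Measure.prod_restrict, ← Measure.volume_eq_prod ℝ ℝ]; exact hPT
    have inner : ∀ θ ∈ Set.Ioo (-Real.pi) Real.pi,
        (∫ r in Set.Ioi (0:ℝ), P (r, θ)) = - g lam := by
      intro θ hθ
      set u : ℂ := (Real.cos θ:ℂ) + (Real.sin θ:ℂ) * Complex.I with hu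
      have hderiv : ∀ r : ℝ, HasDerivAt (fun r : ℝ => g (lam - (r:ℂ) * u)) (P (r, θ)) r := by
        intro r
        have h1 : HasDerivAt (fun r : ℝ => (r:ℂ)) 1 r := by
          simpa using (hasDerivAt_id r).ofReal_comp
        have h2 : HasDerivAt (fun r : ℝ => lam - (r:ℂ) * u) (-(1*u)) r :=
          (h1.mul_const u).const_sub lam
        have h3 := (hgd _).hasFDerivAt.comp_hasDerivAt r h2
        refine h3.congr_deriv ?_
        have he : -((1:ℂ)*u) = ((-Real.cos θ : ℝ):ℂ) + ((-Real.sin θ : ℝ):ℂ) * Complex.I := by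
          rw [hu]; push_cast; ring
        rw [he, clm_eval]
        simp only [hP, hA, hB, hw, hu]
        push_cast
        ring
      have hint1 : IntegrableOn (fun r : ℝ => P (r, θ)) (Set.Ioi (0:ℝ)) := by
        have hc : Continuous (fun r : ℝ => P (r, θ)) :=
          hPc.comp (continuous_id.prodMk continuous_const)
        have hsupp : HasCompactSupport (fun r : ℝ => P (r, θ)) := by
          apply HasCompactSupport.intro (isCompact_Icc (a := -|R|) (b := |R|))
          intro r hr
          have hRr : R < |r| := by
            rcases not_and_or.mp (fun hmem => hr ⟨hmem.1, hmem.2⟩) with h | h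
            · push_neg at h
              calc R ≤ |R| := le_abs_self R
                _ < -r := by linarith
                _ ≤ |r| := neg_le_abs r
            · push_neg at h
              calc R ≤ |R| := le_abs_self R
                _ < r := h
                _ ≤ |r| := le_abs_self r
          have := hvan (r, θ) hRr
          simp [hP, this.1, this.2.1]
        exact (hc.integrable_of_hasCompactSupport hsupp).integrableOn
      have htend : Filter.Tendsto (fun r : ℝ => g (lam - (r:ℂ) * u)) Filter.atTop (nhds 0) := by
        apply Filter.Tendsto.congr' ?_ tendsto_const_nhds
        filter_upwards [Filter.eventually_gt_atTop R] with r hrR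
        have hRr : R < |r| := lt_of_lt_of_le hrR (le_abs_self r)
        exact ((hvan (r, θ) hRr).2.2).symm
      have hkey := integral_Ioi_of_hasDerivAt_of_tendsto'
        (f := fun r : ℝ => g (lam - (r:ℂ) * u)) (f' := fun r : ℝ => P (r, θ))
        (fun r _ => hderiv r) hint1 htend
      rw [hkey]
      simp
    calc (∫ p in T, P p)
        = ∫ θ in Set.Ioo (-Real.pi) Real.pi, ∫ r in Set.Ioi (0:ℝ), P (r, θ) := by
          rw [hT, Measure.volume_eq_prod ℝ ℝ, ← Measure.prod_restrict]
          exact integral_prod_symm P hint'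
      _ = ∫ _θ in Set.Ioo (-Real.pi) Real.pi, (- g lam) :=
          setIntegral_congr_fun measurableSet_Ioo (fun θ hθ => inner θ hθ)
      _ = (-(2*Real.pi) : ℂ) * g lam := by
          rw [setIntegral_const, Real.volume_real_Ioo_of_le (by linarith [Real.pi_pos]), sub_neg_eq_add]
          rw [Complex.real_smul]
          push_cast
          ring
  -- the Q-integral: integrate in θ first
  have intQ : (∫ p in T, Q p) = 0 := by
    have hQT : IntegrableOn Q (Set.Ioi (0:ℝ) ×ˢ Set.Ioo (-Real.pi) Real.pi) := by
      rw [← hT]; exact hQint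
    have hint' : Integrable Q
        ((volume.restrict (Set.Ioi (0:ℝ))).prod (volume.restrict (Set.Ioo (-Real.pi) Real.pi))) := by
      rw [Measure.prod_restrict, ← Measure.volume_eq_prod ℝ ℝ]; exact hQT
    have inner : ∀ r ∈ Set.Ioi (0:ℝ), (∫ θ in Set.Ioo (-Real.pi) Real.pi, Q (r, θ)) = 0 := by
      intro r hr
      have hr' : (0:ℝ) < r := hr
      have hr0 : (r:ℂ) ≠ 0 := Complex.ofReal_ne_zero.mpr hr'.ne'
      set k : ℝ → ℂ := fun θ =>
        (Complex.I / (r:ℂ)) * g (lam - (r:ℂ) * ((Real.cos θ:ℂ) + (Real.sin θ:ℂ) * Complex.I))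
        with hk
      have hderiv : ∀ θ : ℝ, HasDerivAt k (Q (r, θ)) θ := by
        intro θ
        have hcos : HasDerivAt (fun θ : ℝ => ((Real.cos θ : ℝ) : ℂ)) ((-Real.sin θ : ℝ) : ℂ) θ :=
          (Real.hasDerivAt_cos θ).ofReal_comp
        have hsin : HasDerivAt (fun θ : ℝ => ((Real.sin θ : ℝ) : ℂ)) ((Real.cos θ : ℝ) : ℂ) θ :=
          (Real.hasDerivAt_sin θ).ofReal_comp
        have hu := hcos.add (hsin.mul_const Complex.I)
        have hw' := (hu.const_mul (r:ℂ)).const_sub lam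
        have h3 := ((hgd _).hasFDerivAt.comp_hasDerivAt θ hw').const_mul (Complex.I / (r:ℂ))
        refine h3.congr_deriv ?_
        have he : -((r:ℂ) * (((-Real.sin θ : ℝ):ℂ) + ((Real.cos θ : ℝ):ℂ) * Complex.I))
            = ((r * Real.sin θ : ℝ):ℂ) + ((-(r * Real.cos θ) : ℝ):ℂ) * Complex.I := by
          push_cast; ring
        rw [he, clm_eval]
        simp only [hQ, hA, hB, hw, Pi.add_apply]
        push_cast
        field_simp
        ring
      have hmono : (-Real.pi : ℝ) ≤ Real.pi := by linarith [Real.pi_pos]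
      have hii : IntervalIntegrable (fun θ : ℝ => Q (r, θ)) volume (-Real.pi) Real.pi :=
        (hQc.comp (continuous_const.prodMk continuous_id)).intervalIntegrable _ _
      have hftc := intervalIntegral.integral_eq_sub_of_hasDerivAt
        (f := k) (f' := fun θ : ℝ => Q (r, θ)) (fun θ _ => hderiv θ) hii
      rw [← MeasureTheory.integral_Ioc_eq_integral_Ioo,
        ← intervalIntegral.integral_of_le hmono, hftc, hk]
      simp [Real.sin_pi, Real.cos_neg, Real.sin_neg]
    calc (∫ p in T, Q p)
        = ∫ r in Set.Ioi (0:ℝ), ∫ θ in Set.Ioo (-Real.pi) Real.pi, Q (r, θ) := by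
          rw [hT, Measure.volume_eq_prod ℝ ℝ, ← Measure.prod_restrict]
          exact integral_prod Q hint'
      _ = ∫ _r in Set.Ioi (0:ℝ), (0:ℂ) :=
          setIntegral_congr_fun measurableSet_Ioi (fun r hr => inner r hr)
      _ = 0 := by simp
  -- assemble
  rw [step1, step2, setIntegral_congr_fun hTm step3, integral_const_mul,
    integral_add hPint hQint, intP, intQ]
  push_cast
  ring

/-- Helffer–Sjöstrand formula: for `f ∈ C^{n+1}(ℝ)`, a smooth compactly supported
cutoff `χ : ℂ → [0,1]`, and `λ ∈ ℝ` with `χ(λ) = 1`,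
`f(λ) = (1/π) ∫_ℂ ∂̄(f̃_n(z)χ(z)) / (λ - z) d²z`. -/
theorem helffer_sjostrand (n : ℕ) (f : ℝ → ℝ) (hf : ContDiff ℝ (n + 1) f)
    (χ : ℂ → ℝ) (hχ : ContDiff ℝ (⊤ : ℕ∞) χ) (hχc : HasCompactSupport χ)
    (hχ01 : ∀ z, χ z ∈ Set.Icc (0 : ℝ) 1)
    (lam : ℝ) (hlam : χ (lam : ℂ) = 1) :
    ((f lam : ℝ) : ℂ) = (1 / Real.pi : ℂ) *
      ∫ z : ℂ, dbar (fun w => almostAnalyticExt n f w * ((χ w : ℝ) : ℂ)) z /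
        ((lam : ℂ) - z) := by
  set g : ℂ → ℂ := fun w => almostAnalyticExt n f w * ((χ w : ℝ) : ℂ) with hgdef
  have hext : ContDiff ℝ 1 (almostAnalyticExt n f) := by
    unfold almostAnalyticExt
    apply ContDiff.sum
    intro k hk
    have hkn : k ≤ n := Nat.lt_succ_iff.mp (Finset.mem_range.mp hk)
    have h1 : ContDiff ℝ 1 (fun z : ℂ => (Complex.I * (z.im:ℂ))^k) :=
      (contDiff_const.mul (Complex.ofRealCLM.contDiff.comp Complex.imCLM.contDiff)).pow k
    have hk' : ContDiff ℝ 1 (iteratedDeriv k f) := by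
      apply contDiff_one_iteratedDeriv k f
      apply hf.of_le
      exact_mod_cast Nat.succ_le_succ hkn
    have h2 : ContDiff ℝ 1 (fun z : ℂ => ((iteratedDeriv k f z.re : ℝ) : ℂ)) :=
      Complex.ofRealCLM.contDiff.comp (hk'.comp Complex.reCLM.contDiff)
    exact (h1.mul h2).div_const _
  have hχ1 : ContDiff ℝ 1 (fun w : ℂ => ((χ w : ℝ):ℂ)) :=
    Complex.ofRealCLM.contDiff.comp (hχ.of_le (by simp))
  have hg1 : ContDiff ℝ 1 g := hext.mul hχ1
  have hgc : HasCompactSupport g := by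
    have hcc : HasCompactSupport (fun w : ℂ => ((χ w : ℝ):ℂ)) :=
      hχc.comp_left (g := fun x : ℝ => (x:ℂ)) Complex.ofReal_zero
    exact hcc.mul_left
  have hgl : g (lam:ℂ) = (f lam : ℂ) := by
    rw [hgdef]
    simp only [hlam, Complex.ofReal_one, mul_one]
    unfold almostAnalyticExt
    rw [Finset.sum_eq_single 0]
    · simp [iteratedDeriv_zero]
    · intro k _ hk0
      simp [Complex.ofReal_im, zero_pow hk0]
    · intro h; exact absurd (Finset.mem_range.mpr (Nat.succ_pos n)) h
  rw [pompeiu g hg1 hgc (lam:ℂ), hgl]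
  have hpi : (Real.pi:ℂ) ≠ 0 := by exact_mod_cast Real.pi_ne_zero
  field_simp
end
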